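/- arXiv:0806.4220 — 3 statements merged into one kernel-verified Lean document; each statement's English description precedes it below -/
import Mathlib

section
/- Let (I_i : i ∈ I) be an indexed family of P-ideals, where each I_i consists of countable subsets of a set S_i. Form the Σ-product Σ(⊗_{i∈I} I_i), consisting of all disjoint unions ∐_{i∈I} x(i) where x ∈ ∏_{i∈I} I_i and {i : x(i) ≠ ∅} is countable. Then Σ(⊗_{i∈I} I_i) is a P-ideal on the disjoint union ∐_{i∈I} S_i. -/
/-- A P-ideal on a set: a family of countable sets, downwards closed, closed under
finite unions, containing all finite sets, and σ-directed under almost inclusion. -/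
def IsPIdeal {α : Type*} (I : Set (Set α)) : Prop :=
  (∀ x ∈ I, x.Countable) ∧
  (∀ x ∈ I, ∀ y ⊆ x, y ∈ I) ∧
  (∀ x ∈ I, ∀ y ∈ I, x ∪ y ∈ I) ∧
  (∀ x : Set α, x.Finite → x ∈ I) ∧
  (∀ f : ℕ → Set α, (∀ n, f n ∈ I) → ∃ z ∈ I, ∀ n, (f n \ z).Finite)

/-- The Σ-product `Σ(⊗_{i∈I} I_i)` of an indexed family of ideals: disjoint unions
`∐ x(i)` of choices `x(i) ∈ I_i` with countable support. -/
def SigmaProd {ι : Type*} {S : ι → Type*} (I : ∀ i, Set (Set (S i))) :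
    Set (Set (Σ i, S i)) :=
  {z | ∃ x : ∀ i, Set (S i), (∀ i, x i ∈ I i) ∧ {i | x i ≠ ∅}.Countable ∧
    z = {p : Σ i, S i | p.2 ∈ x p.1}}

private lemma pideal_finUnion {α : Type*} {J : Set (Set α)} (hJ : IsPIdeal J)
    (f : ℕ → Set α) (hf : ∀ n, f n ∈ J) (N : ℕ) :
    (⋃ m ∈ Finset.range N, f m) ∈ J := by
  induction N with
  | zero => simpa using hJ.2.2.2.1 ∅ Set.finite_empty
  | succ N ih =>
      have h : (⋃ m ∈ Finset.range (N + 1), f m)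
          = (⋃ m ∈ Finset.range N, f m) ∪ f N := by
        rw [Finset.range_add_one]
        simp [Set.union_comm]
      rw [h]
      exact hJ.2.2.1 _ ih _ (hf N)

theorem stmt4 {ι : Type*} {S : ι → Type*} (I : ∀ i, Set (Set (S i)))
    (hI : ∀ i, IsPIdeal (I i)) : IsPIdeal (SigmaProd I) := by
  refine ⟨?_, ?_, ?_, ?_, ?_⟩
  · -- countable
    rintro z ⟨x, hx, hsupp, rfl⟩
    have heq : {p : Σ i, S i | p.2 ∈ x p.1}
        = ⋃ i ∈ {i | x i ≠ ∅}, Sigma.mk i '' x i := by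
      ext ⟨i, s⟩
      simp only [Set.mem_setOf_eq, Set.mem_iUnion, Set.mem_image]
      constructor
      · intro hs
        exact ⟨i, Set.nonempty_iff_ne_empty.1 ⟨s, hs⟩, s, hs, rfl⟩
      · rintro ⟨j, -, t, ht, h⟩
        obtain ⟨rfl, h2⟩ := Sigma.mk.inj_iff.1 h
        rwa [← eq_of_heq h2]
    rw [heq]
    exact Set.Countable.biUnion hsupp fun i _ => ((hI i).1 _ (hx i)).image _
  · -- downward closed
    rintro z ⟨x, hx, hsupp, rfl⟩ y hy
    refine ⟨fun i => {s | (⟨i, s⟩ : Σ i, S i) ∈ y}, fun i => ?_, ?_, ?_⟩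
    · exact (hI i).2.1 _ (hx i) _ fun s hs => hy hs
    · refine hsupp.mono fun i hi => ?_
      simp only [Set.mem_setOf_eq, ← Set.nonempty_iff_ne_empty] at hi ⊢
      obtain ⟨s, hs⟩ := hi
      exact ⟨s, hy hs⟩
    · ext ⟨i, s⟩; rfl
  · -- union
    rintro z ⟨x, hx, hs, rfl⟩ z' ⟨x', hx', hs', rfl⟩
    refine ⟨fun i => x i ∪ x' i, fun i => (hI i).2.2.1 _ (hx i) _ (hx' i), ?_, ?_⟩
    · refine (hs.union hs').mono fun i hi => ?_
      simp only [Set.mem_setOf_eq, ← Set.nonempty_iff_ne_empty, Set.mem_union] at hi ⊢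
      rcases hi with ⟨s, hs | hs⟩
      · exact Or.inl ⟨s, hs⟩
      · exact Or.inr ⟨s, hs⟩
    · ext ⟨i, s⟩; simp [Set.mem_union]
  · -- finite sets
    intro x hx
    refine ⟨fun i => Sigma.mk i ⁻¹' x, fun i => ?_, ?_, ?_⟩
    · exact (hI i).2.2.2.1 _ (hx.preimage (sigma_mk_injective.injOn))
    · refine ((hx.image Sigma.fst).countable).mono fun i hi => ?_
      simp only [Set.mem_setOf_eq, ← Set.nonempty_iff_ne_empty] at hi
      obtain ⟨s, hs⟩ := hi
      exact ⟨⟨i, s⟩, hs, rfl⟩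
    · ext ⟨i, s⟩; rfl
  · -- σ-directed
    intro f hf
    classical
    choose x hx hsupp hfx using hf
    set T : Set ι := ⋃ n, {i | x n i ≠ ∅} with hT
    have hTc : T.Countable := Set.countable_iUnion hsupp
    obtain ⟨κ, hκ⟩ := Set.countable_iff_exists_injective.1 hTc
    -- σ-directedness in each coordinate
    have hW : ∀ i, ∃ w ∈ I i, ∀ n, (x n i \ w).Finite := fun i =>
      (hI i).2.2.2.2 (fun n => x n i) (fun n => hx n i)
    choose w hw hwfin using hW
    set κ' : ι → ℕ := fun i => if h : i ∈ T then κ ⟨i, h⟩ else 0 with hκ'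
    have hκ'inj : ∀ i ∈ T, ∀ j ∈ T, κ' i = κ' j → i = j := by
      intro i hi j hj hij
      have hij' : κ ⟨i, hi⟩ = κ ⟨j, hj⟩ := by
        simpa only [hκ', dif_pos hi, dif_pos hj] using hij
      exact congrArg Subtype.val (hκ hij')
    set z : ∀ i, Set (S i) := fun i =>
      if i ∈ T then w i ∪ ⋃ m ∈ Finset.range (κ' i + 1), x m i else ∅ with hz
    have hzI : ∀ i, z i ∈ I i := by
      intro i
      simp only [hz]
      split
      · exact (hI i).2.2.1 _ (hw i) _
          (pideal_finUnion (hI i) (fun n => x n i) (fun n => hx n i) _)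
      · exact (hI i).2.2.2.1 ∅ Set.finite_empty
    refine ⟨{p : Σ i, S i | p.2 ∈ z p.1}, ⟨z, hzI, ?_, rfl⟩, ?_⟩
    · refine hTc.mono fun i hi => ?_
      by_contra h
      simp only [Set.mem_setOf_eq, hz, if_neg h] at hi
      exact hi rfl
    · intro n
      -- the bad set of indices
      have hB : ({i ∈ T | κ' i < n}).Finite := by
        have himfin : (κ' '' {i ∈ T | κ' i < n}).Finite :=
          (Set.finite_Iio n).subset (by rintro m ⟨i, ⟨-, hi⟩, rfl⟩; exact hi)
        exact Set.Finite.of_finite_image himfin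
          (fun i hi j hj hij => hκ'inj i hi.1 j hj.1 hij)
      have hsub : f n \ {p : Σ i, S i | p.2 ∈ z p.1}
          ⊆ ⋃ i ∈ {i ∈ T | κ' i < n}, Sigma.mk i '' (x n i \ w i) := by
        rintro ⟨i, s⟩ ⟨hfs, hzs⟩
        rw [hfx n] at hfs
        simp only [Set.mem_setOf_eq] at hfs hzs
        have hiT : i ∈ T := Set.mem_iUnion.2 ⟨n, Set.nonempty_iff_ne_empty.1 ⟨s, hfs⟩⟩
        have hznot : s ∉ z i := hzs
        simp only [hz, if_pos hiT, Set.mem_union, not_or] at hznot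
        obtain ⟨hsw, hsU⟩ := hznot
        have hlt : κ' i < n := by
          by_contra hle
          push_neg at hle
          exact hsU (Set.mem_biUnion (Finset.mem_range.2 (Nat.lt_succ_of_le hle)) hfs)
        exact Set.mem_biUnion ⟨hiT, hlt⟩ ⟨s, ⟨hfs, hsw⟩, rfl⟩
      refine Set.Finite.subset ?_ hsub
      exact hB.biUnion fun i _ => (hwfin i n).image _
end

section
/- Assume CH (2^{ℵ₀} = ℵ₁). If H ⊆ [ω₁]^{≤ℵ₀} is σ-directed under almost inclusion ⊆*, then (H, ⊆*) has cofinal type either 1 or ω₁ in the Tukey order; it has cofinal type 1 if and only if (H, ⊆*) has a maximal element (an element z with x ⊆* z for all x ∈ H). -/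
/-- Almost inclusion: `x ⊆* y` iff `x \ y` is finite. -/
def AlmostLE {S : Type*} (x y : Set S) : Prop := (x \ y).Finite

/-- `H` is σ-directed under almost inclusion. -/
def SigmaDirected {S : Type*} (H : Set (Set S)) : Prop :=
  ∀ J ⊆ H, J.Countable → ∃ z ∈ H, ∀ x ∈ J, AlmostLE x z

/-- `f : A → B` is convergent (w.r.t. relations `rA`, `rB`). -/
def ConvMap {A B : Type*} (rA : A → A → Prop) (rB : B → B → Prop) (f : A → B) : Prop :=
  ∀ b : B, ∃ a : A, ∀ a' : A, rA a a' → rB b (f a')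

/-- `TukeyLE rA rB`: A ≲ B in the Tukey order (there is a convergent map B → A). -/
def TukeyLE {A B : Type*} (rA : A → A → Prop) (rB : B → B → Prop) : Prop :=
  ∃ f : B → A, ConvMap rB rA f

/-- Tukey (cofinal) equivalence. -/
def TukeyEquiv {A B : Type*} (rA : A → A → Prop) (rB : B → B → Prop) : Prop :=
  TukeyLE rA rB ∧ TukeyLE rB rA

/-- The ordinal `ω₁` as a linearly ordered type (ordinals below `ℵ₁`). -/
def Omega1 : Type 1 := {o : Ordinal.{0} // o < (Cardinal.aleph 1).ord}

noncomputable instance : LinearOrder Omega1 := by unfold Omega1; infer_instance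

/-! ### Auxiliary lemmas -/

lemma almostLE_trans {S : Type*} {x y z : Set S} (h1 : AlmostLE x y) (h2 : AlmostLE y z) :
    AlmostLE x z := by
  refine (h1.union h2).subset ?_
  rintro t ⟨ht, htz⟩
  by_cases h : t ∈ y
  · exact Or.inr ⟨h, htz⟩
  · exact Or.inl ⟨ht, h⟩

def Omega1.val (α : Omega1) : Ordinal.{0} := Subtype.val α

lemma Omega1.lt_iff {a b : Omega1} : a < b ↔ a.val < b.val := Iff.rfl
lemma Omega1.le_iff {a b : Omega1} : a ≤ b ↔ a.val ≤ b.val := Iff.rfl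

lemma omega1_wf : WellFounded (fun a b : Omega1 => a < b) :=
  Subrelation.wf (fun {a _} h => (Omega1.lt_iff.mp h : (fun x : Omega1 => x.val) a < _))
    (InvImage.wf (fun a : Omega1 => a.val) Ordinal.lt_wf)

lemma mk_omega1 : Cardinal.mk.{1} Omega1 = Cardinal.lift.{1,0} (Cardinal.aleph 1 : Cardinal.{0}) := by
  have h : Cardinal.mk.{1} Omega1 = Cardinal.mk (Set.Iio ((Cardinal.aleph 1).ord)) := rfl
  rw [h, Ordinal.mk_Iio_ordinal, Cardinal.card_ord]

lemma cnt_ord (b : Ordinal.{0}) (hb : b.card ≤ Cardinal.aleph0) :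
    Countable {o : Ordinal.{0} // o < b} := by
  rw [← Cardinal.mk_le_aleph0_iff]
  have h : Cardinal.mk {o : Ordinal.{0} // o < b} = Cardinal.mk (Set.Iio b) := rfl
  rw [h, Ordinal.mk_Iio_ordinal,
    show (Cardinal.aleph0 : Cardinal.{1}) = Cardinal.lift.{1,0} (Cardinal.aleph0 : Cardinal.{0}) from
      Cardinal.lift_aleph0.symm, Cardinal.lift_le]
  exact hb

lemma omega1_card_le (α : Omega1) : α.val.card ≤ Cardinal.aleph0 := by
  have h : α.val.card < Cardinal.aleph 1 := Cardinal.lt_ord.mp α.2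
  rwa [← Cardinal.succ_aleph0, Order.lt_succ_iff] at h

lemma countable_Iio' (α : Omega1) : Countable {β : Omega1 // β < α} := by
  haveI := cnt_ord α.val (omega1_card_le α)
  exact Function.Injective.countable (f := fun β : {β : Omega1 // β < α} =>
    (⟨β.1.val, Omega1.lt_iff.mp β.2⟩ : {o : Ordinal.{0} // o < α.val}))
    (by intro a b h; have h2 := congrArg Subtype.val h
        exact Subtype.ext (Subtype.ext h2))

lemma countable_Iic' (α : Omega1) : Countable {β : Omega1 // β ≤ α} := by
  haveI := cnt_ord (α.val + 1) (by
    rw [Ordinal.add_one_eq_succ, Ordinal.card_succ]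
    exact (add_le_add (omega1_card_le α) Cardinal.one_lt_aleph0.le).trans
      (le_of_eq Cardinal.aleph0_add_aleph0))
  exact Function.Injective.countable (f := fun β : {β : Omega1 // β ≤ α} =>
    (⟨β.1.val, lt_of_le_of_lt (Omega1.le_iff.mp β.2)
      (by rw [Ordinal.add_one_eq_succ]; exact Order.lt_succ _)⟩ :
      {o : Ordinal.{0} // o < α.val + 1}))
    (by intro a b h; have h2 := congrArg Subtype.val h
        exact Subtype.ext (Subtype.ext h2))

open Cardinal in
lemma exists_surj (hCH : (2 : Cardinal.{0}) ^ (Cardinal.aleph0 : Cardinal.{0}) = Cardinal.aleph 1)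
    (H : Set (Set Omega1)) (hcnt : ∀ x ∈ H, x.Countable) (hne : H.Nonempty) :
    ∃ g : Omega1 → ↥H, Function.Surjective g := by
  have key : ∀ x : ↥H, ∃ f : ℕ → Option Omega1,
      (Option.some '' x.1 ∪ {none}) = Set.range f := by
    intro x
    have hc : (Option.some '' x.1 ∪ {none} : Set (Option Omega1)).Countable :=
      ((hcnt x.1 x.2).image _).union (Set.countable_singleton _)
    exact hc.exists_eq_range ⟨none, Or.inr rfl⟩
  choose F hF using key
  have hFinj : Function.Injective F := by
    intro a b hab
    have h1 : (Option.some '' a.1 ∪ {none}) = (Option.some '' b.1 ∪ {none}) := by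
      rw [hF a, hF b, hab]
    have h2 : a.1 = b.1 := by
      ext t
      constructor
      · intro ht
        have : (Option.some t : Option Omega1) ∈ Option.some '' b.1 ∪ {none} := by
          rw [← h1]; exact Or.inl ⟨t, ht, rfl⟩
        rcases this with ⟨u, hu, he⟩ | he
        · cases Option.some_injective _ he; exact hu
        · exact absurd he (by simp)
      · intro ht
        have : (Option.some t : Option Omega1) ∈ Option.some '' a.1 ∪ {none} := by
          rw [h1]; exact Or.inl ⟨t, ht, rfl⟩
        rcases this with ⟨u, hu, he⟩ | he
        · cases Option.some_injective _ he; exact hu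
        · exact absurd he (by simp)
    exact Subtype.ext h2
  have hle : Cardinal.mk ↥H ≤ Cardinal.mk Omega1 := by
    calc Cardinal.mk ↥H ≤ Cardinal.mk (ℕ → Option Omega1) := Cardinal.mk_le_of_injective hFinj
    _ = Cardinal.lift.{1,0} (aleph 1) := by
        rw [Cardinal.mk_arrow, Cardinal.mk_option, mk_omega1, Cardinal.mk_nat,
          Cardinal.lift_aleph0, Cardinal.lift_id',
          Cardinal.add_one_of_aleph0_le (Cardinal.aleph0_le_lift.mpr (Cardinal.aleph0_le_aleph 1)),
          ← hCH, Cardinal.lift_power, Cardinal.lift_two, Cardinal.lift_aleph0,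
          ← Cardinal.power_mul, Cardinal.aleph0_mul_aleph0]
    _ = Cardinal.mk Omega1 := mk_omega1.symm
  obtain ⟨e⟩ := Cardinal.le_def _ _ |>.mp hle
  haveI : Nonempty ↥H := hne.to_subtype
  exact ⟨Function.invFun e, Function.invFun_surjective e.injective⟩

lemma exists_chain (H : Set (Set Omega1)) (hdir : SigmaDirected H) (g : Omega1 → ↥H) :
    ∃ z : Omega1 → ↥H, ∀ α : Omega1,
      (∀ β, β ≤ α → AlmostLE (g β).1 (z α).1) ∧ (∀ β, β < α → AlmostLE (z β).1 (z α).1) := by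
  have hub : ∀ J : Set (Set Omega1), J ⊆ H → J.Countable →
      ∃ w : ↥H, ∀ x ∈ J, AlmostLE x w.1 := by
    intro J hJ hc
    obtain ⟨w, hwH, hw⟩ := hdir J hJ hc
    exact ⟨⟨w, hwH⟩, hw⟩
  choose u hu using hub
  let Jf : ∀ α : Omega1, (∀ β : Omega1, β < α → ↥H) → Set (Set Omega1) :=
    fun α rec => (Set.range fun β : {β : Omega1 // β ≤ α} => ((g β.1).1 : Set Omega1)) ∪
      Set.range fun β : {β : Omega1 // β < α} => ((rec β.1 β.2).1 : Set Omega1)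
  have hJsub : ∀ α rec, Jf α rec ⊆ H := by
    rintro α rec x (⟨β, rfl⟩ | ⟨β, rfl⟩)
    · exact (g β.1).2
    · exact (rec β.1 β.2).2
  have hJcnt : ∀ α rec, (Jf α rec).Countable := by
    intro α rec
    haveI := countable_Iic' α
    haveI := countable_Iio' α
    exact (Set.countable_range _).union (Set.countable_range _)
  let z : Omega1 → ↥H := omega1_wf.fix
    (fun α rec => u (Jf α rec) (hJsub α rec) (hJcnt α rec))
  have hz : ∀ α, z α = u (Jf α (fun β _ => z β)) (hJsub α (fun β _ => z β))
      (hJcnt α (fun β _ => z β)) :=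
    fun α => omega1_wf.fix_eq _ α
  refine ⟨z, fun α => ?_⟩
  have h := hu (Jf α (fun β _ => z β)) (hJsub α (fun β _ => z β)) (hJcnt α (fun β _ => z β))
  rw [← hz α] at h
  constructor
  · intro β hβ
    exact h (g β).1 (Or.inl ⟨⟨β, hβ⟩, rfl⟩)
  · intro β hβ
    exact h (z β).1 (Or.inr ⟨⟨β, hβ⟩, rfl⟩)

theorem stmt11 (hCH : (2 : Cardinal.{0}) ^ (Cardinal.aleph0 : Cardinal.{0}) = Cardinal.aleph 1)
    (H : Set (Set Omega1)) (hcnt : ∀ x ∈ H, x.Countable) (hdir : SigmaDirected H) :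
    ((TukeyEquiv (fun a b : ↥H => AlmostLE a.1 b.1) (fun _ _ : Unit => True)) ∨
     (TukeyEquiv (fun a b : ↥H => AlmostLE a.1 b.1) (fun a b : Omega1 => a ≤ b))) ∧
    ((TukeyEquiv (fun a b : ↥H => AlmostLE a.1 b.1) (fun _ _ : Unit => True)) ↔
      ∃ z ∈ H, ∀ x ∈ H, AlmostLE x z) := by
  obtain ⟨w0, hw0H, -⟩ := hdir ∅ (by simp) Set.countable_empty
  have hne : H.Nonempty := ⟨w0, hw0H⟩
  have main_iff : (TukeyEquiv (fun a b : ↥H => AlmostLE a.1 b.1) (fun _ _ : Unit => True)) ↔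
      ∃ z ∈ H, ∀ x ∈ H, AlmostLE x z := by
    constructor
    · rintro ⟨⟨f, hf⟩, -⟩
      refine ⟨(f ()).1, (f ()).2, fun x hx => ?_⟩
      obtain ⟨a, ha⟩ := hf ⟨x, hx⟩
      exact ha () trivial
    · rintro ⟨w, hwH, hw⟩
      constructor
      · exact ⟨fun _ => ⟨w, hwH⟩, fun b => ⟨(), fun _ _ => hw b.1 b.2⟩⟩
      · exact ⟨fun _ => (), fun _ => ⟨⟨w0, hw0H⟩, fun _ _ => trivial⟩⟩
  refine ⟨?_, main_iff⟩
  by_cases hmax : ∃ z ∈ H, ∀ x ∈ H, AlmostLE x z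
  · exact Or.inl (main_iff.mpr hmax)
  · right
    obtain ⟨g, hg⟩ := exists_surj hCH H hcnt hne
    obtain ⟨z, hzchain⟩ := exists_chain H hdir g
    constructor
    · -- convergent map Omega1 → H
      refine ⟨z, fun y => ?_⟩
      obtain ⟨γ, hγ⟩ := hg y
      exact ⟨γ, fun β hβ => by rw [← hγ]; exact (hzchain β).1 γ hβ⟩
    · -- convergent map H → Omega1
      have hx : ∀ α : Omega1, ∃ x : ↥H, ∀ γ, γ < α → ¬ AlmostLE x.1 (z γ).1 := by
        intro α
        by_contra hcon
        push_neg at hcon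
        apply hmax
        refine ⟨(z α).1, (z α).2, fun x hxH => ?_⟩
        obtain ⟨γ, hγα, hγ⟩ := hcon ⟨x, hxH⟩
        exact almostLE_trans hγ ((hzchain α).2 γ hγα)
      choose xfn hxfn using hx
      choose f hf using hg
      refine ⟨f, fun α => ?_⟩
      refine ⟨xfn α, fun y hy => ?_⟩
      by_contra hlt
      replace hlt : f y < α := lt_of_not_ge hlt
      have h1 : AlmostLE y.1 (z (f y)).1 := by
        have h2 := (hzchain (f y)).1 (f y) le_rfl
        rwa [hf y] at h2
      exact hxfn α (f y) hlt (almostLE_trans hy h1)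
end

section
/- The forcing notions Q(H) and R(H) are complete semilattices: if A is a set of conditions of R(H) that has an upper bound, then ⋁A = (⋃_{a∈A} x_a, ⋃_{a∈A} 𝒳_a) is its least upper bound in R(H); similarly for Q(H), taking the topological closure of ⋃_{a∈A} x_a in the first coordinate. -/
/-- `A` is cofinal in `(H, ⊆*)`. -/
def CofIn {S : Type*} (H A : Set (Set S)) : Prop := ∀ h ∈ H, ∃ a ∈ A, AlmostLE h a

/-- `∂_H(J)`. -/
def Del {S : Type*} (H J : Set (Set S)) : Set (Set S) := {x | CofIn H {y ∈ J | x ⊆ y}}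

/-- `(x, 𝒳)` is a condition of the forcing notion `R(H)`. -/
def RCond {S : Type*} (H : Set (Set S)) (x : Set S) (X : Set (Set (Set S))) : Prop :=
  x ∈ Del H H ∧ X.Countable ∧ ∀ J ∈ X, J ⊆ H ∧ CofIn H J ∧ x ∈ Del H J

/-- Extension in `R(H)`: coordinatewise inclusion. -/
def RLe {S : Type*} (p q : Set S × Set (Set (Set S))) : Prop := p.1 ⊆ q.1 ∧ p.2 ⊆ q.2

/-- `x ⊑ y`: `x` is an initial segment of `y` (end-extension). -/
def EndExt (x y : Set Ordinal) : Prop := x ⊆ y ∧ ∀ a ∈ x, ∀ b ∈ y, b ≤ a → b ∈ x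

/-- `x` is a closed subset of `θ`. -/
def ClosedSub (θ : Ordinal) (x : Set Ordinal) : Prop :=
  ∀ s ⊆ x, s.Nonempty → sSup s < θ → sSup s ∈ x

/-- `(x, 𝒳)` is a condition of the forcing notion `Q(H)`. -/
def QCond (θ : Ordinal) (H : Set (Set Ordinal)) (x : Set Ordinal)
    (X : Set (Set (Set Ordinal))) : Prop :=
  x ⊆ Set.Iio θ ∧ ClosedSub θ x ∧ x ∈ Del H H ∧ X.Countable ∧
    ∀ J ∈ X, J ⊆ H ∧ x ∈ Del H J

/-- Extension in `Q(H)`: end-extension in the first coordinate. -/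
def QLe (p q : Set Ordinal × Set (Set (Set Ordinal))) : Prop :=
  EndExt p.1 q.1 ∧ p.2 ⊆ q.2

/-- Topological closure of `s` within `θ`: add the limit points below `θ`. -/
def clOf (θ : Ordinal) (s : Set Ordinal) : Set Ordinal :=
  s ∪ {α | α < θ ∧ (s ∩ Set.Iio α).Nonempty ∧ sSup (s ∩ Set.Iio α) = α}

lemma cofIn_mono {S : Type*} {H A B : Set (Set S)} (hAB : A ⊆ B) (h : CofIn H A) :
    CofIn H B := fun x hx => by
  obtain ⟨a, ha, hxa⟩ := h x hx
  exact ⟨a, hAB ha, hxa⟩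

lemma del_mono {S : Type*} {H J : Set (Set S)} {x x' : Set S} (hxx : x ⊆ x')
    (h : x' ∈ Del H J) : x ∈ Del H J :=
  cofIn_mono (fun y hy => ⟨hy.1, hxx.trans hy.2⟩) h

lemma clOf_subset {θ : Ordinal} {Y z : Set Ordinal} (hYz : Y ⊆ z) (hz : ClosedSub θ z) :
    clOf θ Y ⊆ z := by
  rintro α (h | ⟨hθ', hne, hsup⟩)
  · exact hYz h
  · have hlt : sSup (Y ∩ Set.Iio α) < θ := by rw [hsup]; exact hθ'
    have := hz (Y ∩ Set.Iio α) (fun y hy => hYz hy.1) hne hlt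
    rwa [hsup] at this

lemma closedSub_clOf {θ : Ordinal} {Y : Set Ordinal} (hY : Y ⊆ Set.Iio θ) :
    ClosedSub θ (clOf θ Y) := by
  intro s hs hne hlt
  by_cases hγ : sSup s ∈ s
  · exact hs hγ
  · have hclθ : clOf θ Y ⊆ Set.Iio θ := by
      rintro α (h | ⟨hθ', _, _⟩)
      · exact hY h
      · exact hθ'
    have hbdds : BddAbove s := ⟨θ, fun b hb => (hclθ (hs hb)).le⟩
    have hslt : ∀ b ∈ s, b < sSup s := fun b hb =>
      lt_of_le_of_ne (le_csSup hbdds hb) (fun h => hγ (h ▸ hb))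
    have hbddY : BddAbove (Y ∩ Set.Iio (sSup s)) := ⟨sSup s, fun y hy => hy.2.le⟩
    have hYne : (Y ∩ Set.Iio (sSup s)).Nonempty := by
      obtain ⟨b, hb⟩ := hne
      rcases hs hb with hbY | ⟨_, ⟨y, hy⟩, _⟩
      · exact ⟨b, hbY, hslt b hb⟩
      · exact ⟨y, hy.1, hy.2.trans (hslt b hb)⟩
    right
    refine ⟨hlt, hYne, le_antisymm (csSup_le hYne fun y hy => hy.2.le) ?_⟩
    refine csSup_le hne fun b hb => ?_
    rcases hs hb with hbY | ⟨_, hne', hsup'⟩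
    · exact le_csSup hbddY ⟨hbY, hslt b hb⟩
    · calc b = sSup (Y ∩ Set.Iio b) := hsup'.symm
        _ ≤ sSup (Y ∩ Set.Iio (sSup s)) := csSup_le_csSup hbddY hne'
            (fun y hy => ⟨hy.1, hy.2.trans (hslt b hb)⟩)

/-- `Q(H)` and `R(H)` are complete semilattices: any set of conditions with an upper
bound has a least upper bound, given by coordinatewise unions (taking the closure of
the union of first coordinates in the case of `Q(H)`). -/
theorem stmt15 {S : Type*} (Hr : Set (Set S))
    (θ : Ordinal) (hθ : Cardinal.aleph0 < θ.cof)
    (Hq : Set (Set Ordinal)) (hHq : Hq.Nonempty)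
    (hHqmem : ∀ x ∈ Hq, x ⊆ Set.Iio θ ∧ x.Countable) :
    (∀ A : Set (Set S × Set (Set (Set S))),
      (∀ p ∈ A, RCond Hr p.1 p.2) →
      (∃ u, RCond Hr u.1 u.2 ∧ ∀ p ∈ A, RLe p u) →
      (RCond Hr (⋃ p ∈ A, p.1) (⋃ p ∈ A, p.2) ∧
        (∀ p ∈ A, RLe p (Prod.mk (⋃ p ∈ A, p.1) (⋃ p ∈ A, p.2))) ∧
        ∀ u, RCond Hr u.1 u.2 → (∀ p ∈ A, RLe p u) →
          RLe (Prod.mk (⋃ p ∈ A, p.1) (⋃ p ∈ A, p.2)) u)) ∧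
    (∀ A : Set (Set Ordinal × Set (Set (Set Ordinal))),
      (∀ p ∈ A, QCond θ Hq p.1 p.2) →
      (∃ u, QCond θ Hq u.1 u.2 ∧ ∀ p ∈ A, QLe p u) →
      (QCond θ Hq (clOf θ (⋃ p ∈ A, p.1)) (⋃ p ∈ A, p.2) ∧
        (∀ p ∈ A, QLe p (Prod.mk (clOf θ (⋃ p ∈ A, p.1)) (⋃ p ∈ A, p.2))) ∧
        ∀ u, QCond θ Hq u.1 u.2 → (∀ p ∈ A, QLe p u) →
          QLe (Prod.mk (clOf θ (⋃ p ∈ A, p.1)) (⋃ p ∈ A, p.2)) u)) := by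
  constructor
  · -- R(H)
    rintro A hA ⟨u, hu, hub⟩
    have hx : (⋃ p ∈ A, p.1) ⊆ u.1 := Set.iUnion₂_subset fun p hp => (hub p hp).1
    have hX : (⋃ p ∈ A, p.2) ⊆ u.2 := Set.iUnion₂_subset fun p hp => (hub p hp).2
    refine ⟨⟨del_mono hx hu.1, hu.2.1.mono hX, fun J hJ => ?_⟩, fun p hp => ?_, fun v hv hvub => ?_⟩
    · obtain ⟨h1, h2, h3⟩ := hu.2.2 J (hX hJ)
      exact ⟨h1, h2, del_mono hx h3⟩
    · exact ⟨fun a ha => Set.mem_biUnion hp ha, fun J hJ => Set.mem_biUnion hp hJ⟩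
    · exact ⟨Set.iUnion₂_subset fun p hp => (hvub p hp).1,
        Set.iUnion₂_subset fun p hp => (hvub p hp).2⟩
  · -- Q(H)
    rintro A hA ⟨u, hu, hub⟩
    set Y := ⋃ p ∈ A, p.1 with hYdef
    have hYu : Y ⊆ u.1 := Set.iUnion₂_subset fun p hp => (hub p hp).1.1
    have hX : (⋃ p ∈ A, p.2) ⊆ u.2 := Set.iUnion₂_subset fun p hp => (hub p hp).2
    have hcl : clOf θ Y ⊆ u.1 := clOf_subset hYu hu.2.1
    have hYmem : ∀ b ∈ Y, ∃ p ∈ A, b ∈ p.1 := by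
      intro b hb
      simp only [hYdef, Set.mem_iUnion, exists_prop] at hb
      exact hb
    refine ⟨⟨hcl.trans hu.1, closedSub_clOf (hYu.trans hu.1), del_mono hcl hu.2.2.1,
      hu.2.2.2.1.mono hX, fun J hJ => ?_⟩, fun p hp => ?_, fun v hv hvub => ?_⟩
    · obtain ⟨h1, h2⟩ := hu.2.2.2.2 J (hX hJ)
      exact ⟨h1, del_mono hcl h2⟩
    · refine ⟨⟨fun a ha => Or.inl (Set.mem_biUnion hp ha), ?_⟩,
        fun J hJ => Set.mem_biUnion hp hJ⟩
      intro a ha b hb hba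
      exact (hub p hp).1.2 a ha b (hcl hb) hba
    · have hYv : Y ⊆ v.1 := Set.iUnion₂_subset fun p hp => (hvub p hp).1.1
      have hclv : clOf θ Y ⊆ v.1 := clOf_subset hYv hv.2.1
      refine ⟨⟨hclv, ?_⟩, Set.iUnion₂_subset fun p hp => (hvub p hp).2⟩
      intro a ha b hb hba
      rcases ha with haY | ⟨haθ, hne, hsup⟩
      · obtain ⟨p, hp, hap⟩ := hYmem a haY
        exact Or.inl (Set.mem_biUnion hp ((hvub p hp).1.2 a hap b hb hba))
      · rcases eq_or_lt_of_le hba with rfl | hblt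
        · exact Or.inr ⟨haθ, hne, hsup⟩
        · have : ¬ ∀ y ∈ Y ∩ Set.Iio a, y ≤ b := by
            intro h
            have := csSup_le hne h
            rw [hsup] at this
            exact absurd this (not_le_of_gt hblt)
          push_neg at this
          obtain ⟨y, hy, hby⟩ := this
          obtain ⟨p, hp, hyp⟩ := hYmem y hy.1
          exact Or.inl (Set.mem_biUnion hp ((hvub p hp).1.2 y hyp b hb hby.le))
end
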